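/- (Core ODE lemma for Theorem 3.4.) Let C > 0 and c > 0. Suppose y : ℝ → ℝ is differentiable on [0,∞), satisfies y(t) ≥ 0 for all t ≥ 0, y(0) < c, and the differential inequality y′(t) ≤ C·y(t)²·log(y(t)/c) for all t ≥ 0 (with log denoting the real logarithm, extended by log 0 = 0). Then y(t) ≤ y(0) for all t ≥ 0; in particular y(t) < c for all t ≥ 0. -/
import Mathlib


/-- Core ODE lemma for Theorem 3.4: if `y ≥ 0` is differentiable on `[0,∞)`, starts below
the threshold `c > 0`, and satisfies `y′ ≤ C·y²·log(y/c)`, then `y` stays below its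
initial value, and in particular below `c`. (Here `Real.log 0 = 0`.) -/
theorem ode_logistic_log_decay (C c : ℝ) (hC : 0 < C) (hc : 0 < c) (y : ℝ → ℝ)
    (hdiff : ∀ t : ℝ, 0 ≤ t → DifferentiableAt ℝ y t)
    (hnn : ∀ t : ℝ, 0 ≤ t → 0 ≤ y t)
    (h0 : y 0 < c)
    (hineq : ∀ t : ℝ, 0 ≤ t → deriv y t ≤ C * (y t) ^ 2 * Real.log (y t / c)) :
    (∀ t : ℝ, 0 ≤ t → y t ≤ y 0) ∧ (∀ t : ℝ, 0 ≤ t → y t < c) := by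
  have hcont : ContinuousOn y (Set.Ici 0) := fun t ht =>
    (hdiff t ht).continuousAt.continuousWithinAt
  -- derivative is nonpositive wherever y ≤ c
  have hder : ∀ s : ℝ, 0 ≤ s → y s ≤ c → deriv y s ≤ 0 := by
    intro s hs hysc
    refine (hineq s hs).trans ?_
    have h1 : 0 ≤ C * (y s) ^ 2 := by positivity
    have h2 : Real.log (y s / c) ≤ 0 := by
      apply Real.log_nonpos
      · exact div_nonneg (hnn s hs) hc.le
      · rw [div_le_one hc]; exact hysc
    exact mul_nonpos_of_nonneg_of_nonpos h1 h2
  -- y stays below c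
  have hlt : ∀ t : ℝ, 0 ≤ t → y t < c := by
    by_contra hcon
    push_neg at hcon
    obtain ⟨t₀, ht₀, hyt₀⟩ := hcon
    set B : Set ℝ := Set.Ici 0 ∩ y ⁻¹' Set.Ici c with hB
    have hBclosed : IsClosed B := by
      have := hcont.preimage_isClosed_of_isClosed isClosed_Ici (isClosed_Ici (a := c))
      exact this
    have hBne : B.Nonempty := ⟨t₀, ht₀, hyt₀⟩
    have hBbdd : BddBelow B := ⟨0, fun x hx => hx.1⟩
    set T := sInf B with hT
    have hTB : T ∈ B := hBclosed.csInf_mem hBne hBbdd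
    have hT0 : 0 ≤ T := hTB.1
    have hyT : c ≤ y T := hTB.2
    have hTpos : 0 < T := by
      rcases lt_or_eq_of_le hT0 with h | h
      · exact h
      · exfalso; rw [← h] at hyT; exact absurd hyT (not_le.mpr h0)
    have hlow : ∀ s : ℝ, 0 ≤ s → s < T → y s < c := by
      intro s hs hsT
      by_contra hys
      push_neg at hys
      exact absurd (csInf_le hBbdd ⟨hs, hys⟩) (not_le.mpr hsT)
    have hle : ∀ s ∈ Set.Icc (0:ℝ) T, y s ≤ c := by
      intro s hsmem
      rcases lt_or_eq_of_le hsmem.2 with h | h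
      · exact (hlow s hsmem.1 h).le
      · -- s = T : y T ≤ c by left continuity
        subst h
        have hcw : ContinuousWithinAt y (Set.Ico 0 T) T :=
          (hdiff T hT0).continuousAt.continuousWithinAt
        have hne : (Set.Ico (0:ℝ) T).Nonempty := ⟨0, le_refl _, hTpos⟩
        have hmem : T ∈ closure (Set.Ico 0 T) := by
          rw [closure_Ico hTpos.ne]
          exact ⟨hT0, le_refl _⟩
        have hnb : (nhdsWithin T (Set.Ico 0 T)).NeBot :=
          mem_closure_iff_nhdsWithin_neBot.mp hmem
        refine le_of_tendsto (hcw.tendsto) ?_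
        filter_upwards [self_mem_nhdsWithin] with x hx
        exact (hlow x hx.1 hx.2).le
    -- antitone on [0, T]
    have hanti : AntitoneOn y (Set.Icc 0 T) := by
      apply antitoneOn_of_deriv_nonpos (convex_Icc 0 T)
        (hcont.mono (Set.Icc_subset_Ici_self))
      · intro x hx
        rw [interior_Icc] at hx
        exact (hdiff x hx.1.le).differentiableWithinAt
      · intro x hx
        rw [interior_Icc] at hx
        exact hder x hx.1.le (hle x ⟨hx.1.le, hx.2.le⟩)
    have := hanti (Set.left_mem_Icc.mpr hT0) (Set.right_mem_Icc.mpr hT0) hT0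
    exact absurd (hyT.trans this) (not_le.mpr h0)
  -- antitone on all of [0, ∞)
  have hanti : AntitoneOn y (Set.Ici 0) := by
    apply antitoneOn_of_deriv_nonpos (convex_Ici 0) hcont
    · intro x hx
      rw [interior_Ici] at hx
      exact (hdiff x hx.le).differentiableWithinAt
    · intro x hx
      rw [interior_Ici] at hx
      exact hder x hx.le (hlt x hx.le).le
  exact ⟨fun t ht => hanti Set.self_mem_Ici ht ht, hlt⟩
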